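/- For the greedy max-quota choice function with laminar populations, the matching produced by candidate-proposing DA is the candidate-optimal stable matching: every candidate weakly prefers her DA assignment to her assignment in any other stable matching. -/

import Mathlib

/-! Shared definitions: PMA choice functions (greedy max-quota, Algorithm 1, Algorithm 2),
laminarity, deferred acceptance, and stability notions. -/

namespace PMA

variable {α : Type*} [DecidableEq α]

/-- A population constraint: a set of candidates together with a bound
(a maximum quota or a minimum target, depending on context). -/
abbrev Pop (α : Type*) := Finset α × ℕ

/-- A set `S` respects all maximum quotas. -/
def Feasible (maxQ : List (Pop α)) (S : Finset α) : Prop :=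
  ∀ q ∈ maxQ, (S ∩ q.1).card ≤ q.2

instance (maxQ : List (Pop α)) (S : Finset α) : Decidable (Feasible maxQ S) :=
  List.decidableBAll _ _

/-- Greedy pass: traverse candidates in the given order, accepting each candidate
whose addition violates no maximum quota. -/
def pass2 (maxQ : List (Pop α)) : List α → Finset α → Finset α
  | [], S => S
  | c :: rest, S =>
      if Feasible maxQ (insert c S) then pass2 maxQ rest (insert c S)
      else pass2 maxQ rest S

/-- Candidate `c` belongs to some population whose minimum target is not yet met by `S`. -/
def HelpsMin (minT : List (Pop α)) (S : Finset α) (c : α) : Prop :=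
  ∃ p ∈ minT, c ∈ p.1 ∧ (S ∩ p.1).card < p.2

instance (minT : List (Pop α)) (S : Finset α) (c : α) : Decidable (HelpsMin minT S c) :=
  List.decidableBEx _ _

/-- First pass of Algorithm 1: traverse candidates in order, accepting (subject to
maximum quotas) those who help meet some unmet minimum target. -/
def pass1 (maxQ minT : List (Pop α)) : List α → Finset α → Finset α
  | [], S => S
  | c :: rest, S =>
      if HelpsMin minT S c ∧ Feasible maxQ (insert c S) then
        pass1 maxQ minT rest (insert c S)
      else pass1 maxQ minT rest S

/-- Algorithm 1 choice function: two passes over the candidates of `C`,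
in the priority order given by the list `order`. -/
def choice1 (maxQ minT : List (Pop α)) (order : List α) (C : Finset α) : Finset α :=
  pass2 maxQ (order.filter fun c => decide (c ∈ C))
    (pass1 maxQ minT (order.filter fun c => decide (c ∈ C)) ∅)

/-- The greedy max-quota choice function (no minimum targets), with the priority order
given by the linear order on candidates. -/
def greedy [LinearOrder α] (maxQ : List (Pop α)) (C : Finset α) : Finset α :=
  pass2 maxQ (C.sort (· ≤ ·)) ∅

/-- The greedy max-quota choice function with an explicit priority list. -/
def greedyL (maxQ : List (Pop α)) (order : List α) (C : Finset α) : Finset α :=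
  pass2 maxQ (order.filter fun c => decide (c ∈ C)) ∅

/-- The number of populations with a minimum target not yet met by `S` to which `c` belongs. -/
def nUnmet (minT : List (Pop α)) (S : Finset α) (c : α) : ℕ :=
  (minT.filter fun p => decide (c ∈ p.1 ∧ (S ∩ p.1).card < p.2)).length

/-- The candidates of `R` maximizing the number of unmet minimum targets they help. -/
def bestSet [LinearOrder α] (minT : List (Pop α)) (S R : Finset α) : Finset α :=
  R.filter fun c => ∀ d ∈ R, nUnmet minT S d ≤ nUnmet minT S c

lemma bestSet_nonempty [LinearOrder α] (minT : List (Pop α)) (S : Finset α) {R : Finset α}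
    (hR : R.Nonempty) : (bestSet minT S R).Nonempty := by
  obtain ⟨b, hb, hmax⟩ := R.exists_max_image (nUnmet minT S) hR
  exact ⟨b, Finset.mem_filter.mpr ⟨hb, hmax⟩⟩

/-- The next candidate processed by Algorithm 2: among `R`, maximize the number of unmet
minimum targets helped, breaking ties by the priority order. -/
def pick [LinearOrder α] (minT : List (Pop α)) (S : Finset α) {R : Finset α}
    (hR : R.Nonempty) : α :=
  (bestSet minT S R).min' (bestSet_nonempty minT S hR)

lemma pick_mem [LinearOrder α] (minT : List (Pop α)) (S : Finset α) {R : Finset α}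
    (hR : R.Nonempty) : pick minT S hR ∈ R :=
  Finset.filter_subset _ _ (Finset.min'_mem _ _)

/-- Main loop of Algorithm 2: `R` is the set of unprocessed candidates, `S` the chosen set. -/
def choice2Go [LinearOrder α] (maxQ minT : List (Pop α)) (R S : Finset α) : Finset α :=
  if hR : R.Nonempty then
    choice2Go maxQ minT (R.erase (pick minT S hR))
      (if Feasible maxQ (insert (pick minT S hR) S) then insert (pick minT S hR) S else S)
  else S
  termination_by R.card
  decreasing_by exact Finset.card_erase_lt_of_mem (pick_mem minT S hR)

/-- Algorithm 2 choice function. -/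
def choice2 [LinearOrder α] (maxQ minT : List (Pop α)) (C : Finset α) : Finset α :=
  choice2Go maxQ minT C ∅

/-- A family of populations is laminar: any two are disjoint or nested. -/
def Laminar (pops : List (Pop α)) : Prop :=
  ∀ p ∈ pops, ∀ q ∈ pops, Disjoint p.1 q.1 ∨ p.1 ⊆ q.1 ∨ q.1 ⊆ p.1

/-- The sets of the populations carrying a positive minimum target. -/
def minTargetSets (minT : List (Pop α)) : Set (Finset α) :=
  {P | ∃ t, (P, t) ∈ minT ∧ 0 < t}

/-- A family of sets is a union of pairwise-disjoint chains: it can be partitioned into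
subfamilies, each totally ordered by inclusion, with sets in different subfamilies disjoint. -/
def UnionOfDisjointChains (F : Set (Finset α)) : Prop :=
  ∃ Part : Set (Set (Finset α)), ⋃₀ Part = F ∧ (∀ c ∈ Part, IsChain (· ⊆ ·) c) ∧
    Part.Pairwise fun c c' => ∀ P ∈ c, ∀ Q ∈ c', Disjoint P Q

section DA

variable {β : Type*} [Fintype α] [DecidableEq β]

/-- The institution to which candidate `c` currently applies: the most-preferred institution
on her list that has not yet rejected her (`none` if her list is exhausted). -/
def applyTo (prefs : α → List β) (rej : α → Finset β) (c : α) : Option β :=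
  (prefs c).find? fun m => decide (m ∉ rej c)

/-- The set of candidates currently applying to institution `m`. -/
def applicants (prefs : α → List β) (rej : α → Finset β) (m : β) : Finset α :=
  Finset.univ.filter fun c => applyTo prefs rej c = some m

/-- One round of candidate-proposing deferred acceptance: each candidate applies to her
most-preferred not-yet-rejecting institution; each institution keeps its choice from its
applicants and rejects the rest. `rej c` is the set of institutions that have rejected `c`. -/
def daRound (Ch : β → Finset α → Finset α) (prefs : α → List β) (rej : α → Finset β) :
    α → Finset β := fun c =>
  match applyTo prefs rej c with
  | none => rej c
  | some m => if c ∈ Ch m (applicants prefs rej m) then rej c else insert m (rej c)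

variable [Fintype β]

/-- The rejection sets at the end of candidate-proposing deferred acceptance (running enough
rounds to guarantee that a fixed point, i.e. a round with no rejections, has been reached). -/
def daRej (Ch : β → Finset α → Finset α) (prefs : α → List β) : α → Finset β :=
  (daRound Ch prefs)^[Fintype.card α * Fintype.card β + 1] fun _ => ∅

/-- The matching produced by candidate-proposing deferred acceptance. -/
def daMatch (Ch : β → Finset α → Finset α) (prefs : α → List β) : α → Option β :=
  applyTo prefs (daRej Ch prefs)

end DA

section Stability

variable {β : Type*} [DecidableEq β]

/-- Candidate `c` strictly prefers institution `m` to the assignment `o`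
(being unmatched, `none`, is worse than any institution on her list). -/
def Prefers (prefs : α → List β) (c : α) (m : β) : Option β → Prop
  | none => m ∈ prefs c
  | some m' => m ∈ prefs c ∧ (prefs c).idxOf m < (prefs c).idxOf m'

/-- Candidate `c` weakly prefers assignment `o` to assignment `o'`. -/
def WeaklyPrefers (prefs : α → List β) (c : α) (o o' : Option β) : Prop :=
  o = o' ∨ ∃ m, o = some m ∧ Prefers prefs c m o'

variable [Fintype α]

/-- The set of candidates assigned to institution `m` by the matching `M`. -/
def assignedTo (M : α → Option β) (m : β) : Finset α :=
  Finset.univ.filter fun c => M c = some m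

/-- Individual rationality: candidates are matched only to listed institutions, and each
institution chooses all candidates assigned to it. -/
def IndivRational (Ch : β → Finset α → Finset α) (prefs : α → List β) (M : α → Option β) :
    Prop :=
  (∀ c m, M c = some m → m ∈ prefs c) ∧ ∀ m, Ch m (assignedTo M m) = assignedTo M m

/-- `(c, m)` is a blocking pair for the matching `M`. -/
def Blocks (Ch : β → Finset α → Finset α) (prefs : α → List β) (M : α → Option β)
    (c : α) (m : β) : Prop :=
  Prefers prefs c m (M c) ∧ c ∈ Ch m (insert c (assignedTo M m))

/-- Stability: individual rationality plus no blocking pairs. -/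
def StableMatching (Ch : β → Finset α → Finset α) (prefs : α → List β) (M : α → Option β) :
    Prop :=
  IndivRational Ch prefs M ∧ ∀ c m, ¬ Blocks Ch prefs M c m

/-- One step of the candidate-Pareto-improvement stage: a blocking pair `(m, c)` such that
`c` can be added to `m` without rejecting anyone is resolved by assigning `c` to `m`. -/
def ParetoStep [DecidableEq α] (Ch : β → Finset α → Finset α) (prefs : α → List β)
    (M M' : α → Option β) : Prop :=
  ∃ m c, Prefers prefs c m (M c) ∧
    Ch m (insert c (assignedTo M m)) = insert c (assignedTo M m) ∧
    M' = Function.update M c (some m)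

end Stability

end PMA


open PMA

/-!
The feasible sets of a laminar family of maximum quotas are the independent sets of a matroid:
if `S` cannot be augmented from a larger feasible `T`, the inclusion-maximal tight quotas
containing the points of `T \ S` are pairwise disjoint, and counting inside and outside them
gives `#T ≤ #S`. At each candidate's turn the greedy choice is a basis of the applicants of
higher priority, so matroid exchange makes the choice function substitutable; it also satisfies
IRC. For any substitutable choice functions with IRC, deferred acceptance keeps the candidates an
institution has rejected irrelevant to its choice from its current applicants, which yields
stability, and no candidate is ever rejected by an institution she is matched to in a stable
matching, which yields candidate optimality.
-/

theorem List.idxOf_le_idxOf_of_find?_eq_some {β : Type*} [DecidableEq β] {p : β → Bool}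
    {l : List β} {a b : β} (h : l.find? p = some a) (hb : b ∈ l) (hpb : p b) :
    l.idxOf a ≤ l.idxOf b := by
  induction l with
  | nil => simp at h
  | cons x l ih =>
    by_cases hpx : p x
    · rw [List.find?_cons_of_pos hpx, Option.some_inj] at h
      simp [h]
    · rw [List.find?_cons_of_neg hpx] at h
      have hxa : x ≠ a := fun hxa => hpx (hxa ▸ List.find?_some h)
      have hxb : x ≠ b := fun hxb => hpx (hxb ▸ hpb)
      rw [List.idxOf_cons_ne _ hxa, List.idxOf_cons_ne _ hxb]
      exact Nat.succ_le_succ (ih h ((List.mem_cons.1 hb).resolve_left hxb.symm))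

theorem Function.isFixedPt_iterate_of_potential {X : Type*} {f : X → X} (μ : X → ℕ) {N : ℕ}
    (hμ : ∀ x, μ x ≤ N) (hstep : ∀ x, f x ≠ x → μ x < μ (f x)) (x : X) :
    IsFixedPt f (f^[N + 1] x) := by
  have key (n : ℕ) : IsFixedPt f (f^[n] x) ∨ n ≤ μ (f^[n] x) := by
    induction n with
    | zero => exact .inr (Nat.zero_le _)
    | succ n ih =>
      rw [iterate_succ_apply']
      by_cases hfix : IsFixedPt f (f^[n] x)
      · exact .inl hfix.apply
      · exact .inr (ih.resolve_left hfix |>.trans_lt (hstep _ hfix))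
  exact (key (N + 1)).resolve_right fun h => by linarith [hμ (f^[N + 1] x)]

namespace PMA

open Finset Function

section Feasible

variable {α : Type*} [DecidableEq α] {maxQ : List (Pop α)}

lemma Feasible.mono {S T : Finset α} (hT : Feasible maxQ T) (h : S ⊆ T) : Feasible maxQ S :=
  fun q hq => (card_le_card (inter_subset_inter_right h)).trans (hT q hq)

lemma feasible_empty : Feasible maxQ (∅ : Finset α) := fun q _ => by simp

lemma exists_tight_of_not_feasible_insert {S : Finset α} {x : α} (hS : Feasible maxQ S)
    (hx : x ∉ S) (h : ¬ Feasible maxQ (insert x S)) :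
    ∃ q ∈ maxQ, x ∈ q.1 ∧ q.2 ≤ #(S ∩ q.1) := by
  simp only [Feasible, not_forall, not_le] at h
  obtain ⟨q, hq, hcard⟩ := h
  by_cases hxq : x ∈ q.1
  · rw [insert_inter_of_mem hxq, card_insert_of_notMem fun h => hx (mem_inter.1 h).1] at hcard
    exact ⟨q, hq, hxq, by omega⟩
  · rw [insert_inter_of_notMem hxq] at hcard
    exact absurd (hS q hq) (by omega)

lemma card_le_card_of_forall_inter {S T : Finset α} {D : Finset (Finset α)}
    (hD : (D : Set (Finset α)).PairwiseDisjoint id)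
    (hle : ∀ P ∈ D, #(T ∩ P) ≤ #(S ∩ P)) (hcov : T \ D.biUnion id ⊆ S) : #T ≤ #S := by
  set U := D.biUnion id
  have hdisj (X : Finset α) : (D : Set (Finset α)).PairwiseDisjoint (X ∩ id ·) :=
    hD.mono fun _ => inter_subset_right
  have hin : #(T ∩ U) ≤ #(S ∩ U) := by
    rw [inter_biUnion, inter_biUnion, card_biUnion (hdisj T), card_biUnion (hdisj S)]
    exact sum_le_sum hle
  have hout : #(T \ U) ≤ #(S \ U) := card_le_card fun x hx =>
    mem_sdiff.2 ⟨hcov hx, (mem_sdiff.1 hx).2⟩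
  rw [← card_sdiff_add_card_inter T U, ← card_sdiff_add_card_inter S U]
  omega

/-- The augmentation axiom: the feasible sets of laminar quotas form a matroid. -/
theorem Laminar.exists_feasible_insert (hlam : Laminar maxQ) {S T : Finset α}
    (hS : Feasible maxQ S) (hT : Feasible maxQ T) (hcard : #S < #T) :
    ∃ x ∈ T, x ∉ S ∧ Feasible maxQ (insert x S) := by
  by_contra! hno
  have htight : ∀ x ∈ T \ S, ∃ q ∈ maxQ, x ∈ q.1 ∧ q.2 ≤ #(S ∩ q.1) ∧
      ∀ q' ∈ maxQ, x ∈ q'.1 → q'.2 ≤ #(S ∩ q'.1) → #q'.1 ≤ #q.1 := by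
    intro x hx
    obtain ⟨hxT, hxS⟩ := mem_sdiff.1 hx
    obtain ⟨q₀, hq₀⟩ := exists_tight_of_not_feasible_insert hS hxS (hno x hxT hxS)
    obtain ⟨q, hq, hqmax⟩ := (maxQ.toFinset.filter fun q => x ∈ q.1 ∧ q.2 ≤ #(S ∩ q.1))
      |>.exists_max_image (fun q => #q.1) ⟨q₀, by simpa using hq₀⟩
    simp only [mem_filter, List.mem_toFinset] at hq hqmax
    exact ⟨q, hq.1, hq.2.1, hq.2.2, fun q' hq' hx' ht' => hqmax q' ⟨hq', hx', ht'⟩⟩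
  choose! f hfQ hxf hftight hfmax using htight
  have hD : ((T \ S).image (fun x => (f x).1) : Set (Finset α)).PairwiseDisjoint id := by
    simp only [coe_image]
    rintro _ ⟨x, hx, rfl⟩ _ ⟨y, hy, rfl⟩ hne
    rcases hlam _ (hfQ x hx) _ (hfQ y hy) with h | h | h
    · exact h
    · exact absurd (eq_of_subset_of_card_le h
        (hfmax x hx _ (hfQ y hy) (h (hxf x hx)) (hftight y hy))) hne
    · exact absurd (eq_of_subset_of_card_le h
        (hfmax y hy _ (hfQ x hx) (h (hxf y hy)) (hftight x hx))).symm hne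
  have hle : #T ≤ #S := by
    refine card_le_card_of_forall_inter hD ?_ ?_
    · simp only [mem_image]
      rintro _ ⟨x, hx, rfl⟩
      exact (hT _ (hfQ x hx)).trans (hftight x hx)
    · intro y hy
      obtain ⟨hyT, hyU⟩ := mem_sdiff.1 hy
      by_contra hyS
      have hyTS : y ∈ T \ S := mem_sdiff.2 ⟨hyT, hyS⟩
      exact hyU (mem_biUnion.2 ⟨_, mem_image_of_mem _ hyTS, hxf y hyTS⟩)
  omega

/-- A basis of `A` in the matroid of feasible sets. -/
def IsMaximalFeasible (maxQ : List (Pop α)) (A B : Finset α) : Prop :=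
  B ⊆ A ∧ Feasible maxQ B ∧ ∀ x ∈ A, x ∉ B → ¬ Feasible maxQ (insert x B)

lemma exists_isMaximalFeasible {A S : Finset α} (hS : Feasible maxQ S) (hSA : S ⊆ A) :
    ∃ B, S ⊆ B ∧ IsMaximalFeasible maxQ A B := by
  obtain ⟨B, hB, hBmax⟩ := (A.powerset.filter fun B => S ⊆ B ∧ Feasible maxQ B)
    |>.exists_max_image card ⟨S, by simpa [hSA] using hS⟩
  simp only [mem_filter, mem_powerset] at hB hBmax
  refine ⟨B, hB.2.1, hB.1, hB.2.2, fun x hxA hxB hfeas => ?_⟩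
  have := hBmax _ ⟨insert_subset hxA hB.1, hB.2.1.trans (subset_insert _ _), hfeas⟩
  rw [card_insert_of_notMem hxB] at this
  omega

lemma IsMaximalFeasible.card_le (hlam : Laminar maxQ) {A B T : Finset α}
    (hB : IsMaximalFeasible maxQ A B) (hT : Feasible maxQ T) (hTA : T ⊆ A) : #T ≤ #B := by
  by_contra! h
  obtain ⟨x, hxT, hxB, hfeas⟩ := hlam.exists_feasible_insert hB.2.1 hT h
  exact hB.2.2 x (hTA hxT) hxB hfeas

lemma IsMaximalFeasible.feasible_insert (hlam : Laminar maxQ) {A B S : Finset α} {c : α}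
    (hB : IsMaximalFeasible maxQ A B) (hcA : c ∉ A) (hc : Feasible maxQ (insert c B))
    (hS : Feasible maxQ S) (hSA : S ⊆ A) : Feasible maxQ (insert c S) := by
  obtain ⟨B', hSB', hB'⟩ := exists_isMaximalFeasible hS (hSA.trans (subset_insert c A))
  by_cases hcB' : c ∈ B'
  · exact hB'.2.1.mono (insert_subset hcB' hSB')
  · have hB'A : B' ⊆ A := fun x hx => (mem_insert.1 (hB'.1 hx)).resolve_left
      fun h => hcB' (h ▸ hx)
    have h₁ := hB'.card_le hlam hc (insert_subset_insert c hB.1)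
    have h₂ := hB.card_le hlam hB'.2.1 hB'A
    rw [card_insert_of_notMem fun h => hcA (hB.1 h)] at h₁
    omega

end Feasible

section Greedy

variable {α : Type*} [DecidableEq α] {maxQ : List (Pop α)}

lemma subset_pass2 (L : List α) (S : Finset α) : S ⊆ pass2 maxQ L S := by
  induction L generalizing S with
  | nil => exact subset_rfl
  | cons c L ih =>
    simp only [pass2]
    split
    · exact (subset_insert c S).trans (ih _)
    · exact ih S

lemma pass2_subset (L : List α) (S : Finset α) : pass2 maxQ L S ⊆ S ∪ L.toFinset := by
  induction L generalizing S with
  | nil => simp [pass2]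
  | cons c L ih =>
    simp only [pass2, List.toFinset_cons]
    split
    · exact (ih _).trans (by grind)
    · exact (ih S).trans (by grind)

lemma feasible_pass2 (L : List α) {S : Finset α} (hS : Feasible maxQ S) :
    Feasible maxQ (pass2 maxQ L S) := by
  induction L generalizing S with
  | nil => exact hS
  | cons c L ih =>
    simp only [pass2]
    split
    · exact ih ‹_›
    · exact ih hS

lemma not_feasible_insert_pass2 {L : List α} {S : Finset α} {c : α} (hcL : c ∈ L)
    (hc : c ∉ pass2 maxQ L S) : ¬ Feasible maxQ (insert c (pass2 maxQ L S)) := by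
  induction L generalizing S with
  | nil => simp at hcL
  | cons d L ih =>
    by_cases hf : Feasible maxQ (insert d S)
    · simp only [pass2, if_pos hf] at hc ⊢
      rcases List.mem_cons.1 hcL with rfl | hcL
      · exact absurd (subset_pass2 L _ (mem_insert_self c S)) hc
      · exact ih hcL hc
    · simp only [pass2, if_neg hf] at hc ⊢
      rcases List.mem_cons.1 hcL with rfl | hcL
      · exact fun h => hf (h.mono (insert_subset_insert c (subset_pass2 L S)))
      · exact ih hcL hc

lemma pass2_append (L₁ L₂ : List α) (S : Finset α) :
    pass2 maxQ (L₁ ++ L₂) S = pass2 maxQ L₂ (pass2 maxQ L₁ S) := by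
  induction L₁ generalizing S with
  | nil => rfl
  | cons c L₁ ih =>
    simp only [List.cons_append, pass2]
    split <;> exact ih _

lemma isMaximalFeasible_pass2 (L : List α) :
    IsMaximalFeasible maxQ L.toFinset (pass2 maxQ L ∅) :=
  ⟨by simpa using pass2_subset (maxQ := maxQ) L ∅, feasible_pass2 L feasible_empty,
    fun _ hx hxB => not_feasible_insert_pass2 (List.mem_toFinset.1 hx) hxB⟩

lemma mem_greedyL_iff {order L₁ L₂ : List α} {C : Finset α} {c : α} (hnd : order.Nodup)
    (hsplit : order = L₁ ++ c :: L₂) (hcC : c ∈ C) :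
    c ∈ greedyL maxQ order C ↔
      Feasible maxQ (insert c (pass2 maxQ (L₁.filter fun x => decide (x ∈ C)) ∅)) := by
  rw [hsplit, List.nodup_append, List.nodup_cons] at hnd
  obtain ⟨-, ⟨hc₂, -⟩, hdisj⟩ := hnd
  have hc₁ : c ∉ L₁ := fun h => hdisj c h c List.mem_cons_self rfl
  rw [greedyL, hsplit, List.filter_append, List.filter_cons_of_pos (by simpa using hcC),
    pass2_append, pass2]
  set S := pass2 maxQ (L₁.filter fun x => decide (x ∈ C)) ∅
  have hcS : c ∉ S := fun h => by simpa [hc₁] using pass2_subset _ _ h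
  split
  · exact iff_of_true (subset_pass2 _ _ (mem_insert_self c S)) ‹_›
  · refine iff_of_false (fun h => ?_) ‹_›
    simpa [hcS, hc₂] using pass2_subset _ _ h

/-- At `c`'s turn the greedy set is a basis of the higher-priority candidates of `C`; for
`C' ⊆ C` the corresponding greedy set is a feasible subset of it, so matroid exchange lets `c` in
again. -/
lemma greedyL_substitutes {order : List α} (hnd : order.Nodup) (hord : ∀ c, c ∈ order)
    (hlam : Laminar maxQ) {C' C : Finset α} {c : α} (hCC : C' ⊆ C) (hcC' : c ∈ C')
    (hc : c ∈ greedyL maxQ order C) : c ∈ greedyL maxQ order C' := by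
  obtain ⟨L₁, L₂, hsplit⟩ := List.append_of_mem (hord c)
  rw [mem_greedyL_iff hnd hsplit (hCC hcC')] at hc
  rw [mem_greedyL_iff hnd hsplit hcC']
  have hc₁ : c ∉ L₁ := fun h =>
    List.disjoint_of_nodup_append (hsplit ▸ hnd) h List.mem_cons_self
  have hsub : (L₁.filter fun x => decide (x ∈ C')).toFinset ⊆
      (L₁.filter fun x => decide (x ∈ C)).toFinset := by
    intro x
    simp only [List.mem_toFinset, List.mem_filter, decide_eq_true_eq]
    exact fun h => ⟨h.1, hCC h.2⟩
  refine (isMaximalFeasible_pass2 _).feasible_insert hlam (fun h => hc₁ ?_) hc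
    (feasible_pass2 _ feasible_empty) ((isMaximalFeasible_pass2 _).1.trans hsub)
  exact (List.mem_filter.1 (List.mem_toFinset.1 h)).1

lemma pass2_filter_eq_of_subset {C T R : Finset α} (hRT : R ⊆ T) (hTC : T ⊆ C) :
    ∀ (L : List α) (S : Finset α), pass2 maxQ (L.filter fun x => decide (x ∈ C)) S = R →
      pass2 maxQ (L.filter fun x => decide (x ∈ T)) S = R
  | [], _, h => h
  | d :: L, S, h => by
    by_cases hdT : d ∈ T
    · rw [List.filter_cons_of_pos (by simpa using hTC hdT), pass2] at h
      rw [List.filter_cons_of_pos (by simpa using hdT), pass2]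
      split at h <;> simp only [*, if_true, if_false] <;>
        exact pass2_filter_eq_of_subset hRT hTC L _ h
    · rw [List.filter_cons_of_neg (by simpa using hdT)]
      by_cases hdC : d ∈ C
      · rw [List.filter_cons_of_pos (by simpa using hdC), pass2] at h
        split at h
        · exact absurd (hRT (h ▸ subset_pass2 _ _ (mem_insert_self d S))) hdT
        · exact pass2_filter_eq_of_subset hRT hTC L S h
      · rw [List.filter_cons_of_neg (by simpa using hdC)] at h
        exact pass2_filter_eq_of_subset hRT hTC L S h

lemma greedyL_irc {order : List α} {C T : Finset α} (hT : greedyL maxQ order C ⊆ T)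
    (hTC : T ⊆ C) : greedyL maxQ order T = greedyL maxQ order C :=
  pass2_filter_eq_of_subset hT hTC order ∅ rfl

lemma greedyL_subset (order : List α) (C : Finset α) : greedyL maxQ order C ⊆ C :=
  fun _ hx => (by simpa using pass2_subset _ _ hx : _ ∧ _).2

end Greedy

structure IsSubstitutableChoice {α : Type*} (Ch : Finset α → Finset α) : Prop where
  subset (C : Finset α) : Ch C ⊆ C
  substitutes {C' C : Finset α} {c : α} : C' ⊆ C → c ∈ C' → c ∈ Ch C → c ∈ Ch C'
  irc {T C : Finset α} : Ch C ⊆ T → T ⊆ C → Ch T = Ch C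

lemma isSubstitutableChoice_greedyL {α : Type*} [DecidableEq α] {maxQ : List (Pop α)}
    {order : List α} (hnd : order.Nodup) (hord : ∀ c, c ∈ order) (hlam : Laminar maxQ) :
    IsSubstitutableChoice (greedyL maxQ order) :=
  ⟨greedyL_subset order, greedyL_substitutes hnd hord hlam, greedyL_irc⟩

section Applications

variable {α β : Type*} [DecidableEq β] {prefs : α → List β} {rej : α → Finset β}
  {c : α} {m : β}

lemma applyTo_eq_some (h : applyTo prefs rej c = some m) : m ∈ prefs c ∧ m ∉ rej c :=
  ⟨List.mem_of_find?_eq_some h, by simpa using List.find?_some h⟩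

lemma mem_of_applyTo_eq_none (h : applyTo prefs rej c = none) (hm : m ∈ prefs c) :
    m ∈ rej c := by
  simpa using List.find?_eq_none.1 h m hm

lemma idxOf_applyTo_le {m' : β} (h : applyTo prefs rej c = some m) (hm' : m' ∈ prefs c)
    (hr : m' ∉ rej c) : (prefs c).idxOf m ≤ (prefs c).idxOf m' :=
  List.idxOf_le_idxOf_of_find?_eq_some h hm' (by simpa using hr)

lemma mem_of_prefers_applyTo (h : Prefers prefs c m (applyTo prefs rej c)) : m ∈ rej c := by
  cases happ : applyTo prefs rej c with
  | none => exact mem_of_applyTo_eq_none happ (by simpa [happ, Prefers] using h)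
  | some m' =>
    rw [happ] at h
    by_contra hr
    exact absurd (idxOf_applyTo_le happ h.1 hr) (not_le.2 h.2)

lemma weaklyPrefers_applyTo {o : Option β}
    (ho : ∀ m, o = some m → m ∈ prefs c ∧ m ∉ rej c) :
    WeaklyPrefers prefs c (applyTo prefs rej c) o := by
  cases happ : applyTo prefs rej c with
  | none =>
    cases o with
    | none => exact .inl rfl
    | some m => exact absurd (mem_of_applyTo_eq_none happ (ho m rfl).1) (ho m rfl).2
  | some m =>
    have hm := applyTo_eq_some happ
    by_cases hmo : some m = o
    · exact .inl hmo
    refine .inr ⟨m, rfl, ?_⟩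
    cases o with
    | none => exact hm.1
    | some m' =>
      have hle := idxOf_applyTo_le happ (ho m' rfl).1 (ho m' rfl).2
      refine ⟨hm.1, hle.lt_of_ne fun heq => hmo ?_⟩
      rw [(List.idxOf_inj hm.1).1 heq]

end Applications

section Rounds

variable {α β : Type*} [Fintype α] [DecidableEq β] {prefs : α → List β}
  {rej : α → Finset β} {c : α} {m : β}

def rejectedBy (rej : α → Finset β) (m : β) : Finset α := univ.filter fun c => m ∈ rej c

lemma mem_rejectedBy : c ∈ rejectedBy rej m ↔ m ∈ rej c := by simp [rejectedBy]

lemma mem_applicants : c ∈ applicants prefs rej m ↔ applyTo prefs rej c = some m := by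
  simp [applicants]

variable [DecidableEq α] {Ch : β → Finset α → Finset α}

lemma subset_daRound (c : α) : rej c ⊆ daRound Ch prefs rej c := by
  cases h : applyTo prefs rej c with
  | none => simp [daRound, h]
  | some m =>
    simp only [daRound, h]
    split_ifs
    exacts [subset_rfl, subset_insert _ _]

lemma mem_daRound_iff : m ∈ daRound Ch prefs rej c ↔
    m ∈ rej c ∨ (applyTo prefs rej c = some m ∧ c ∉ Ch m (applicants prefs rej m)) := by
  cases h : applyTo prefs rej c with
  | none => simp [daRound, h]
  | some m₀ =>
    simp only [daRound, h, Option.some_inj]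
    split_ifs with hch
    · exact ⟨.inl, fun h' => h'.elim id fun ⟨hm, hn⟩ => absurd (hm ▸ hch) hn⟩
    · rw [mem_insert]
      exact ⟨fun h' => h'.elim (fun hm => .inr ⟨hm.symm, hm ▸ hch⟩) .inl,
        fun h' => h'.elim .inr fun ⟨hm, _⟩ => .inl hm.symm⟩

lemma applyTo_daRound (happ : applyTo prefs rej c = some m)
    (hch : c ∈ Ch m (applicants prefs rej m)) :
    applyTo prefs (daRound Ch prefs rej) c = some m := by
  have hc : daRound Ch prefs rej c = rej c := by simp [daRound, happ, hch]
  simpa only [applyTo, hc] using happ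

lemma mem_rejectedBy_daRound : c ∈ rejectedBy (daRound Ch prefs rej) m ↔
    c ∈ rejectedBy rej m ∨
      (c ∈ applicants prefs rej m ∧ c ∉ Ch m (applicants prefs rej m)) := by
  rw [mem_rejectedBy, mem_rejectedBy, mem_applicants, mem_daRound_iff]

lemma applicants_union_rejectedBy_daRound :
    applicants prefs (daRound Ch prefs rej) m ∪ rejectedBy (daRound Ch prefs rej) m =
      applicants prefs rej m ∪ rejectedBy rej m ∪
        applicants prefs (daRound Ch prefs rej) m := by
  ext c
  simp only [mem_union, mem_rejectedBy_daRound]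
  constructor
  · rintro (h | h | ⟨h, -⟩) <;> simp only [h, true_or, or_true]
  · rintro ((h | h) | h)
    · by_cases hch : c ∈ Ch m (applicants prefs rej m)
      · exact .inl (mem_applicants.2 (applyTo_daRound (mem_applicants.1 h) hch))
      · exact .inr (.inr ⟨h, hch⟩)
    · exact .inr (.inl h)
    · exact .inl h

lemma choice_union_rejectedBy_daRound (hCh : ∀ m, IsSubstitutableChoice (Ch m))
    (hinv : Ch m (applicants prefs rej m ∪ rejectedBy rej m) = Ch m (applicants prefs rej m)) :
    Ch m (applicants prefs (daRound Ch prefs rej) m ∪ rejectedBy (daRound Ch prefs rej) m) =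
      Ch m (applicants prefs (daRound Ch prefs rej) m) := by
  rw [applicants_union_rejectedBy_daRound]
  refine ((hCh m).irc (fun x hx => ?_) subset_union_right).symm
  rcases mem_union.1 ((hCh m).subset _ hx) with hxAR | hxA'
  · have hxA := hinv ▸ (hCh m).substitutes subset_union_left hxAR hx
    exact mem_applicants.2 (applyTo_daRound (mem_applicants.1 ((hCh m).subset _ hxA)) hxA)
  · exact hxA'

lemma choice_union_rejectedBy_iterate (hCh : ∀ m, IsSubstitutableChoice (Ch m)) (n : ℕ)
    (m : β) :
    Ch m (applicants prefs ((daRound Ch prefs)^[n] fun _ => ∅) m ∪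
        rejectedBy ((daRound Ch prefs)^[n] fun _ => ∅) m) =
      Ch m (applicants prefs ((daRound Ch prefs)^[n] fun _ => ∅) m) :=
  Iterate.rec (fun rej => ∀ m, Ch m (applicants prefs rej m ∪ rejectedBy rej m) =
      Ch m (applicants prefs rej m))
    (fun m => by rw [show rejectedBy (fun _ => ∅) m = ∅ by simp [rejectedBy], union_empty])
    (fun _ hinv m => choice_union_rejectedBy_daRound hCh (hinv m)) n m

end Rounds

section Outcome

variable {α β : Type*} [Fintype α] [DecidableEq α] [Fintype β] [DecidableEq β]
  {Ch : β → Finset α → Finset α} {prefs : α → List β} {c : α} {m : β}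

/-- Rounds only add rejections, and there are at most `|α| * |β|` of them. -/
lemma daRej_isFixedPt (Ch : β → Finset α → Finset α) (prefs : α → List β) :
    IsFixedPt (daRound Ch prefs) (daRej Ch prefs) := by
  refine isFixedPt_iterate_of_potential (fun rej => ∑ c, #(rej c)) (fun rej => ?_)
    (fun rej hne => ?_) _
  · calc ∑ c, #(rej c) ≤ ∑ _c : α, Fintype.card β := sum_le_sum fun c _ => card_le_univ _
      _ = Fintype.card α * Fintype.card β := by simp
  · obtain ⟨c, hc⟩ := ne_iff.1 hne
    exact sum_lt_sum (fun c _ => card_le_card (subset_daRound c))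
      ⟨c, mem_univ c, card_lt_card ((subset_daRound c).ssubset_of_ne (Ne.symm hc))⟩

lemma assignedTo_daMatch : assignedTo (daMatch Ch prefs) = applicants prefs (daRej Ch prefs) :=
  rfl

lemma mem_choice_of_daMatch_eq_some (h : daMatch Ch prefs c = some m) :
    c ∈ Ch m (assignedTo (daMatch Ch prefs) m) := by
  by_contra hn
  have hm : m ∈ daRound Ch prefs (daRej Ch prefs) c := mem_daRound_iff.2 (.inr ⟨h, hn⟩)
  rw [daRej_isFixedPt Ch prefs] at hm
  exact (applyTo_eq_some h).2 hm

lemma indivRational_daMatch (hsub : ∀ m C, Ch m C ⊆ C) :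
    IndivRational Ch prefs (daMatch Ch prefs) :=
  ⟨fun _ _ h => (applyTo_eq_some h).1, fun m => (hsub m _).antisymm fun _ hc =>
    mem_choice_of_daMatch_eq_some (mem_applicants.1 hc)⟩

lemma not_blocks_daMatch (hCh : ∀ m, IsSubstitutableChoice (Ch m)) (c : α) (m : β) :
    ¬ Blocks Ch prefs (daMatch Ch prefs) c m := by
  rintro ⟨hpref, hch⟩
  set A := applicants prefs (daRej Ch prefs) m
  have hrej : m ∈ daRej Ch prefs c := mem_of_prefers_applyTo hpref
  have hcA : c ∉ A := fun h => (applyTo_eq_some (mem_applicants.1 h)).2 hrej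
  have hinv : Ch m (A ∪ rejectedBy (daRej Ch prefs) m) = Ch m A :=
    choice_union_rejectedBy_iterate hCh _ m
  have hirc : Ch m (insert c A) = Ch m A := by
    rw [← hinv]
    refine (hCh m).irc ?_ (insert_subset (mem_union_right _ (mem_rejectedBy.2 hrej))
      subset_union_left)
    rw [hinv]
    exact ((hCh m).subset A).trans (subset_insert c A)
  rw [assignedTo_daMatch, hirc] at hch
  exact hcA ((hCh m).subset A hch)

theorem stableMatching_daMatch (hCh : ∀ m, IsSubstitutableChoice (Ch m)) :
    StableMatching Ch prefs (daMatch Ch prefs) :=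
  ⟨indivRational_daMatch fun m => (hCh m).subset, not_blocks_daMatch hCh⟩

end Outcome

section Optimality

variable {α β : Type*} [Fintype α] [DecidableEq β] {Ch : β → Finset α → Finset α}
  {prefs : α → List β} {rej : α → Finset β} {M : α → Option β}

def RespectsMatching (rej : α → Finset β) (M : α → Option β) : Prop :=
  ∀ c, ∀ m ∈ rej c, M c ≠ some m

lemma prefers_of_mem_applicants (hM : IndivRational Ch prefs M) (hrej : RespectsMatching rej M)
    {c : α} {m : β} (hc : c ∈ applicants prefs rej m) (hcM : M c ≠ some m) :
    Prefers prefs c m (M c) := by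
  have h := weaklyPrefers_applyTo (rej := rej) (o := M c)
    fun m' h => ⟨hM.1 c m' h, fun hr => hrej c m' hr h⟩
  rw [mem_applicants.1 hc] at h
  rcases h with h | ⟨m', h, hpref⟩
  · exact absurd h.symm hcM
  · exact Option.some_inj.1 h ▸ hpref

/-- At the first rejection of a candidate by her partner `m` in `M`, `m` chooses from its
applicants together with its partners someone outside its partners, who then blocks `M`. -/
lemma RespectsMatching.daRound [DecidableEq α] (hCh : ∀ m, IsSubstitutableChoice (Ch m))
    (hM : StableMatching Ch prefs M) (hrej : RespectsMatching rej M) :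
    RespectsMatching (daRound Ch prefs rej) M := by
  intro c m hm hMc
  rcases mem_daRound_iff.1 hm with hm | ⟨happ, hch⟩
  · exact hrej c m hm hMc
  set A := applicants prefs rej m
  set Y := assignedTo M m with hY
  have mem_Y {c'} : c' ∈ Y ↔ M c' = some m := by simp [Y, assignedTo]
  have hnot : ¬ Ch m (A ∪ Y) ⊆ Y := fun hsub => by
    have hcY : c ∈ Ch m (A ∪ Y) := by
      rw [← (hCh m).irc hsub subset_union_right, hY, hM.1.2 m]
      exact mem_Y.2 hMc
    exact hch ((hCh m).substitutes subset_union_left (mem_applicants.2 happ) hcY)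
  obtain ⟨c', hc'Ch, hc'Y⟩ := not_subset.1 hnot
  have hc'A : c' ∈ A := (mem_union.1 ((hCh m).subset _ hc'Ch)).resolve_right hc'Y
  refine hM.2 c' m ⟨prefers_of_mem_applicants hM.1 hrej hc'A (mt mem_Y.2 hc'Y), ?_⟩
  exact (hCh m).substitutes (insert_subset ((hCh m).subset _ hc'Ch) subset_union_right)
    (mem_insert_self _ _) hc'Ch

theorem weaklyPrefers_daMatch [DecidableEq α] [Fintype β]
    (hCh : ∀ m, IsSubstitutableChoice (Ch m)) (hM : StableMatching Ch prefs M) (c : α) :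
    WeaklyPrefers prefs c (daMatch Ch prefs c) (M c) := by
  have hrej : RespectsMatching (daRej Ch prefs) M :=
    Iterate.rec (RespectsMatching · M) (fun _ _ h => by simp at h)
      (fun _ h => h.daRound hCh hM) _
  exact weaklyPrefers_applyTo fun m h => ⟨hM.1.1 c m h, fun hr => hrej c m hr h⟩

end Optimality

end PMA

theorem da_candidate_optimal_general {α β : Type*} [Fintype α] [DecidableEq α]
    [Fintype β] [DecidableEq β]
    (order : β → List α) (maxQ : β → List (Pop α))
    (horder : ∀ m, (order m).Nodup ∧ ∀ c, c ∈ order m)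
    (hlam : ∀ m, Laminar (maxQ m))
    (prefs : α → List β) :
    StableMatching (fun m => greedyL (maxQ m) (order m)) prefs
        (daMatch (fun m => greedyL (maxQ m) (order m)) prefs) ∧
      ∀ M : α → Option β, StableMatching (fun m => greedyL (maxQ m) (order m)) prefs M →
        ∀ c, WeaklyPrefers prefs c
          (daMatch (fun m => greedyL (maxQ m) (order m)) prefs c) (M c) := by
  have hCh m := isSubstitutableChoice_greedyL (horder m).1 (horder m).2 (hlam m)
  exact ⟨stableMatching_daMatch hCh, fun M hM c => weaklyPrefers_daMatch hCh hM c⟩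

/-- With greedy max-quota choice functions arising from laminar populations
(and strict priority lists), candidate-proposing DA produces the candidate-optimal stable
matching: it is stable, and every candidate weakly prefers her DA assignment to her
assignment in any other stable matching. -/
theorem da_candidate_optimal {α β : Type*} [Fintype α] [DecidableEq α]
    [Fintype β] [DecidableEq β]
    (order : β → List α) (maxQ : β → List (Pop α))
    (horder : ∀ m, (order m).Nodup ∧ ∀ c, c ∈ order m)
    (hlam : ∀ m, Laminar (maxQ m))
    (prefs : α → List β) (hnodup : ∀ c, (prefs c).Nodup) :
    StableMatching (fun m => greedyL (maxQ m) (order m)) prefs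
        (daMatch (fun m => greedyL (maxQ m) (order m)) prefs) ∧
      ∀ M : α → Option β, StableMatching (fun m => greedyL (maxQ m) (order m)) prefs M →
        ∀ c, WeaklyPrefers prefs c
          (daMatch (fun m => greedyL (maxQ m) (order m)) prefs c) (M c) :=
  da_candidate_optimal_general order maxQ horder hlam prefs
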